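/- Suppose h = 1/(4(q+1)) (so that Δ₂ = (1/(q+1))² − 4h/(q+1) = 0) and let E₇ = (2h, 2h). Then the Fréchet derivative of F at E₇ is the linear map given by the matrix J = [[1/2 − 2h, 2h − 1/2], [s·(2h − m), s·(m − 2h)]]; the determinant of J is 0, and its trace equals 1/2 − 2h + s·(m − 2h) = (m − 2h)·(s − s₁) where s₁ = (4h − 1)/(2(m − 2h)), provided m ≠ 2h. In particular, if m ≠ 2h then the trace of J is zero if and only if s = s₁. -/

import Mathlib

/-!
Differentiate `F` at a general point `(x, y)` with `x ≠ 0` by the product and quotient rules.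
On the diagonal `y = x` the factor `1 - y/x` vanishes, so the second row of the Jacobian becomes
`(s (x - m), s (m - x))`, a multiple of `(1, -1)`. At `x = 2h` the relation `4h(q + 1) = 1`
turns the first row into `(1/2 - 2h)(1, -1)`, so the two rows are proportional and `det J = 0`.
-/

/-- The predator–prey vector field
    `F(x,y) = (x(1-x) - q x y - h, s y (1 - y/x)(y - m))`. -/
noncomputable def F (q s h m : ℝ) (p : ℝ × ℝ) : ℝ × ℝ :=
  (p.1 * (1 - p.1) - q * p.1 * p.2 - h, s * p.2 * (1 - p.2 / p.1) * (p.2 - m))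

/-- The continuous linear map `ℝ² → ℝ²` with matrix `[[a, b], [c, d]]`. -/
noncomputable def clm (a b c d : ℝ) : (ℝ × ℝ) →L[ℝ] (ℝ × ℝ) :=
  (a • ContinuousLinearMap.fst ℝ ℝ ℝ + b • ContinuousLinearMap.snd ℝ ℝ ℝ).prod
    (c • ContinuousLinearMap.fst ℝ ℝ ℝ + d • ContinuousLinearMap.snd ℝ ℝ ℝ)

@[simp]
lemma clm_apply (a b c d : ℝ) (v : ℝ × ℝ) :
    clm a b c d v = (a * v.1 + b * v.2, c * v.1 + d * v.2) :=
  rfl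

theorem hasFDerivAt_F (q s h m : ℝ) {x y : ℝ} (hx : x ≠ 0) :
    HasFDerivAt (F q s h m)
      (clm (1 - 2 * x - q * y) (-(q * x))
        (s * y ^ 2 * (y - m) / x ^ 2) (s * ((1 - 2 * y / x) * (y - m) + y * (1 - y / x))))
      (x, y) := by
  have hfst : HasFDerivAt (fun p : ℝ × ℝ => p.1) (ContinuousLinearMap.fst ℝ ℝ ℝ) (x, y) :=
    hasFDerivAt_fst
  have hsnd : HasFDerivAt (fun p : ℝ × ℝ => p.2) (ContinuousLinearMap.snd ℝ ℝ ℝ) (x, y) :=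
    hasFDerivAt_snd
  have hinv : HasFDerivAt (fun p : ℝ × ℝ => p.1⁻¹) _ (x, y) := (hasFDerivAt_inv hx).comp _ hfst
  have hprey := ((hfst.fun_mul ((hasFDerivAt_const 1 _).fun_sub hfst)).fun_sub
    ((hfst.const_mul q).fun_mul hsnd)).sub_const h
  have hpred := ((hsnd.const_mul s).fun_mul
    ((hasFDerivAt_const 1 _).fun_sub (hsnd.fun_mul hinv))).fun_mul (hsnd.sub_const m)
  refine (hprey.prodMk hpred).congr_fderiv (ContinuousLinearMap.ext fun v => ?_)
  simp only [ContinuousLinearMap.prod_apply, add_apply, sub_apply, smul_apply, zero_apply,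
    ContinuousLinearMap.comp_apply, ContinuousLinearMap.coe_fst', ContinuousLinearMap.coe_snd',
    ContinuousLinearMap.toSpanSingleton_apply, smul_eq_mul, clm_apply]
  ext <;> field_simp <;> ring

theorem hasFDerivAt_F_diag (q s h m : ℝ) {x : ℝ} (hx : x ≠ 0) :
    HasFDerivAt (F q s h m)
      (clm (1 - (2 + q) * x) (-(q * x)) (s * (x - m)) (s * (m - x))) (x, x) := by
  convert hasFDerivAt_F q s h m hx using 2 <;> field_simp <;> ring

theorem stmt14_general (q s h m : ℝ) (hq : 0 < q)
    (hhval : h = 1/(4*(q+1))) :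
    HasFDerivAt (F q s h m)
      (clm (1/2 - 2*h) (2*h - 1/2) (s*(2*h - m)) (s*(m - 2*h))) ((2*h, 2*h) : ℝ × ℝ) ∧
    (!![1/2 - 2*h, 2*h - 1/2; s*(2*h - m), s*(m - 2*h)] : Matrix (Fin 2) (Fin 2) ℝ).det
      = 0 ∧
    (!![1/2 - 2*h, 2*h - 1/2; s*(2*h - m), s*(m - 2*h)] : Matrix (Fin 2) (Fin 2) ℝ).trace
      = 1/2 - 2*h + s*(m - 2*h) ∧
    (m ≠ 2*h →
      (!![1/2 - 2*h, 2*h - 1/2; s*(2*h - m), s*(m - 2*h)] :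
        Matrix (Fin 2) (Fin 2) ℝ).trace = (m - 2*h)*(s - (4*h - 1)/(2*(m - 2*h)))) ∧
    (m ≠ 2*h →
      ((!![1/2 - 2*h, 2*h - 1/2; s*(2*h - m), s*(m - 2*h)] :
        Matrix (Fin 2) (Fin 2) ℝ).trace = 0 ↔ s = (4*h - 1)/(2*(m - 2*h)))) := by
  have hh : 0 < h := by rw [hhval]; positivity
  have hΔ : 4 * h * (q + 1) = 1 := by rw [hhval]; field_simp
  have htr : (!![1/2 - 2*h, 2*h - 1/2; s*(2*h - m), s*(m - 2*h)] :
      Matrix (Fin 2) (Fin 2) ℝ).trace = 1/2 - 2*h + s*(m - 2*h) := by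
    simp [Matrix.trace_fin_two_of]
  have htr_factor (hne : m ≠ 2 * h) : 1/2 - 2*h + s*(m - 2*h)
      = (m - 2*h)*(s - (4*h - 1)/(2*(m - 2*h))) := by
    field_simp [sub_ne_zero.mpr hne]; ring
  refine ⟨?_, ?_, htr, fun hne => htr.trans (htr_factor hne), fun hne => ?_⟩
  · convert hasFDerivAt_F_diag q s h m (x := 2 * h) (by positivity) using 2 <;>
      linear_combination hΔ / 2
  · simp only [Matrix.det_fin_two_of]; ring
  · rw [htr, htr_factor hne, mul_eq_zero, sub_eq_zero, sub_eq_zero]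
    simp [hne]

/-- If `h = 1/(4(q+1))` (so `Δ₂ = 0`) and `E₇ = (2h, 2h)`, the Fréchet derivative of `F`
at `E₇` has matrix `J = [[1/2 - 2h, 2h - 1/2], [s(2h - m), s(m - 2h)]]`; `det J = 0`,
`tr J = 1/2 - 2h + s(m - 2h)`, and if `m ≠ 2h` then `tr J = (m - 2h)(s - s₁)` with
`s₁ = (4h - 1)/(2(m - 2h))`, so `tr J = 0 ↔ s = s₁`. -/
theorem stmt14 (q s h m : ℝ) (hq : 0 < q) (hs : 0 < s) (hh : 0 < h)
    (hm0 : 0 < m) (hm1 : m < 1) (hhval : h = 1/(4*(q+1))) :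
    HasFDerivAt (F q s h m)
      (clm (1/2 - 2*h) (2*h - 1/2) (s*(2*h - m)) (s*(m - 2*h))) ((2*h, 2*h) : ℝ × ℝ) ∧
    (!![1/2 - 2*h, 2*h - 1/2; s*(2*h - m), s*(m - 2*h)] : Matrix (Fin 2) (Fin 2) ℝ).det
      = 0 ∧
    (!![1/2 - 2*h, 2*h - 1/2; s*(2*h - m), s*(m - 2*h)] : Matrix (Fin 2) (Fin 2) ℝ).trace
      = 1/2 - 2*h + s*(m - 2*h) ∧
    (m ≠ 2*h →
      (!![1/2 - 2*h, 2*h - 1/2; s*(2*h - m), s*(m - 2*h)] :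
        Matrix (Fin 2) (Fin 2) ℝ).trace = (m - 2*h)*(s - (4*h - 1)/(2*(m - 2*h)))) ∧
    (m ≠ 2*h →
      ((!![1/2 - 2*h, 2*h - 1/2; s*(2*h - m), s*(m - 2*h)] :
        Matrix (Fin 2) (Fin 2) ℝ).trace = 0 ↔ s = (4*h - 1)/(2*(m - 2*h)))) :=
  stmt14_general q s h m hq hhval
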